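/- For square-integrable functions g, h : [a, b] → ℝ, define Φg and Φh by (Φg)(x) = p_i(u_i⁻¹(x)) + d_i · g(u_i⁻¹(x)) for x ∈ [x_{i−1}, x_i) (i = 1, …, N−1) and for x ∈ [x_{N−1}, x_N]. Then ∫_a^b (Φg − Φh)² dx = Σ_{i=1}^{N} d_i² · a_i · ∫_a^b (g − h)² dx, where a_i = (x_i − x_{i−1})/(b − a). In particular, ‖Φg − Φh‖_{L²[a,b]} ≤ (max_{1 ≤ i ≤ N} |d_i|) · ‖g − h‖_{L²[a,b]}. -/

import Mathlib

/-!
On the piece `(x_k, x_{k+1})` the affine parts `p` cancel in `Φg − Φh`, which is therefore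
`d_{k+1} · (g − h) ∘ u_{k+1}⁻¹` there; the affine substitution `t = u_{k+1}(s)` turns the integral of
its square into `d_{k+1}² a_{k+1} ∫_a^b (g − h)²`. Summing over the pieces gives the identity. The
`aᵢ` are nonnegative weights with sum `1`, so `Σ dᵢ² aᵢ ≤ (maxᵢ |dᵢ|)²`, which gives the bound.
-/

open MeasureTheory Set Finset

/-- The paper's `uᵢ⁻¹` when `[α, β] = [x_{i-1}, x_i]`. -/
noncomputable def affineOnto (α β a b : ℝ) (t : ℝ) : ℝ :=
  (t - (b * α - a * β) / (b - a)) / ((β - α) / (b - a))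

section affineOnto

variable {α β a b : ℝ}

lemma affineOnto_left (hab : a ≠ b) (hαβ : α ≠ β) : affineOnto α β a b α = a := by
  have : b - a ≠ 0 := sub_ne_zero.2 hab.symm
  have : β - α ≠ 0 := sub_ne_zero.2 hαβ.symm
  unfold affineOnto; field_simp; ring

lemma affineOnto_right (hab : a ≠ b) (hαβ : α ≠ β) : affineOnto α β a b β = b := by
  have : b - a ≠ 0 := sub_ne_zero.2 hab.symm
  have : β - α ≠ 0 := sub_ne_zero.2 hαβ.symm
  unfold affineOnto; field_simp; ring

lemma integral_comp_affineOnto (hab : a ≠ b) (hαβ : α ≠ β) (f : ℝ → ℝ) :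
    ∫ t in α..β, f (affineOnto α β a b t) = (β - α) / (b - a) * ∫ t in a..b, f t := by
  have hs : (β - α) / (b - a) ≠ 0 :=
    div_ne_zero (sub_ne_zero.2 hαβ.symm) (sub_ne_zero.2 hab.symm)
  have hα := affineOnto_left hab hαβ
  have hβ := affineOnto_right hab hαβ
  simp only [affineOnto, sub_div _ _ ((β - α) / (b - a))] at hα hβ ⊢
  rw [intervalIntegral.integral_comp_div_sub f hs, hα, hβ, smul_eq_mul]

lemma IntervalIntegrable.comp_affineOnto {f : ℝ → ℝ} (hf : IntervalIntegrable f volume a b)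
    (hab : a ≠ b) (hαβ : α ≠ β) :
    IntervalIntegrable (fun t => f (affineOnto α β a b t)) volume α β := by
  have hs : (β - α) / (b - a) ≠ 0 :=
    div_ne_zero (sub_ne_zero.2 hαβ.symm) (sub_ne_zero.2 hab.symm)
  have h := (hf.comp_mul_left (c := ((β - α) / (b - a))⁻¹)).comp_sub_right
    ((b * α - a * β) / (b - a))
  have hα := affineOnto_left hab hαβ
  have hβ := affineOnto_right hab hαβ
  rw [affineOnto, div_eq_iff hs] at hα hβ
  simp only [div_inv_eq_mul, ← hα, ← hβ, sub_add_cancel, ← div_eq_inv_mul] at h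
  exact h

end affineOnto

lemma intervalIntegral.integral_eq_sum_of_eqOn_Ioo {x : ℕ → ℝ} {N : ℕ}
    (hx : ∀ k < N, x k ≤ x (k + 1)) {F : ℝ → ℝ} {G : ℕ → ℝ → ℝ}
    (hG : ∀ k < N, IntervalIntegrable (G k) volume (x k) (x (k + 1)))
    (hFG : ∀ k < N, EqOn F (G k) (Ioo (x k) (x (k + 1)))) :
    ∫ t in x 0..x N, F t = ∑ k ∈ range N, ∫ t in x k..x (k + 1), G k t := by
  have hF : ∀ k < N, IntervalIntegrable F volume (x k) (x (k + 1)) := fun k hk =>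
    (hG k hk).congr_uIoo (uIoo_of_le (hx k hk) ▸ (hFG k hk).symm)
  rw [← intervalIntegral.sum_integral_adjacent_intervals hF]
  exact Finset.sum_congr rfl fun k hk =>
    intervalIntegral.integral_congr_Ioo_of_le (hx k (mem_range.1 hk)) (hFG k (mem_range.1 hk))

lemma Finset.sum_Icc_one_eq_sum_range {M : Type*} [AddCommMonoid M] (f : ℕ → M) (N : ℕ) :
    ∑ i ∈ Icc 1 N, f i = ∑ k ∈ range N, f (k + 1) := by
  rw [range_eq_Ico, sum_Ico_add']
  rfl

lemma sum_Icc_sub_div_eq_one {x : ℕ → ℝ} {N : ℕ} {a b : ℝ} (hx0 : x 0 = a) (hxN : x N = b)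
    (hab : a ≠ b) : ∑ i ∈ Icc 1 N, (x i - x (i - 1)) / (b - a) = 1 := by
  rw [sum_Icc_one_eq_sum_range, ← sum_div]
  simp only [Nat.add_sub_cancel]
  rw [sum_range_sub, hx0, hxN, div_self (sub_ne_zero.2 hab.symm)]

lemma sum_sq_mul_le_sup'_sq {ι : Type*} {s : Finset ι} (hs : s.Nonempty) (d w : ι → ℝ)
    (hw : ∀ i ∈ s, 0 ≤ w i) (hw1 : ∑ i ∈ s, w i = 1) :
    ∑ i ∈ s, d i ^ 2 * w i ≤ (s.sup' hs fun i => |d i|) ^ 2 := by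
  calc ∑ i ∈ s, d i ^ 2 * w i ≤ ∑ i ∈ s, (s.sup' hs fun i => |d i|) ^ 2 * w i := by
        refine sum_le_sum fun i hi => mul_le_mul_of_nonneg_right ?_ (hw i hi)
        rw [← sq_abs]
        exact pow_le_pow_left₀ (abs_nonneg _) (le_sup' (fun i => |d i|) hi) 2
    _ = _ := by rw [← mul_sum, hw1, mul_one]

lemma sqrt_sum_sq_mul_le_sup'_mul_sqrt {ι : Type*} {s : Finset ι} (hs : s.Nonempty) (d w : ι → ℝ)
    (hw : ∀ i ∈ s, 0 ≤ w i) (hw1 : ∑ i ∈ s, w i = 1) {I : ℝ} (hI : 0 ≤ I) :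
    √(∑ i ∈ s, d i ^ 2 * w i * I) ≤ (s.sup' hs fun i => |d i|) * √I := by
  have hM : 0 ≤ s.sup' hs fun i => |d i| :=
    (abs_nonneg _).trans (le_sup' (fun i => |d i|) hs.choose_spec)
  rw [← sum_mul, ← Real.sqrt_sq hM, ← Real.sqrt_mul (sq_nonneg _)]
  exact Real.sqrt_le_sqrt (mul_le_mul_of_nonneg_right (sum_sq_mul_le_sup'_sq hs d w hw hw1) hI)

lemma eqOn_Ioo_of_piecewise {x : ℕ → ℝ} {N : ℕ} {Φ : ℝ → ℝ} {F : ℕ → ℝ → ℝ}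
    (hinner : ∀ i, 1 ≤ i → i ≤ N - 1 → ∀ t ∈ Ico (x (i - 1)) (x i), Φ t = F i t)
    (hlast : ∀ t ∈ Icc (x (N - 1)) (x N), Φ t = F N t) {k : ℕ} (hk : k < N) :
    EqOn Φ (F (k + 1)) (Ioo (x k) (x (k + 1))) := by
  intro t ht
  rcases Nat.lt_or_ge (k + 1) N with hk' | hk'
  · exact hinner (k + 1) k.succ_pos' (by omega) t (Ioo_subset_Ico_self ht)
  · obtain rfl : N = k + 1 := by omega
    exact hlast t (Ioo_subset_Icc_self ht)

/-- For square-integrable `g, h` on `[a, b]`,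
`∫_a^b (Φg − Φh)² = Σᵢ dᵢ² aᵢ ∫_a^b (g − h)²`, and consequently
`‖Φg − Φh‖_{L²} ≤ (maxᵢ |dᵢ|) ‖g − h‖_{L²}`. -/
theorem Phi_L2_contraction
    (a b : ℝ) (hab : a < b) (N : ℕ) (hN : 2 ≤ N)
    (x y : ℕ → ℝ) (hxa : x 0 = a) (hxb : x N = b)
    (hmono : ∀ j, j < N → x j < x (j + 1))
    (d : ℕ → ℝ) (g h : ℝ → ℝ)
    (hg : MemLp g 2 (volume.restrict (Set.Icc a b)))
    (hh : MemLp h 2 (volume.restrict (Set.Icc a b))) :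
    let ai : ℕ → ℝ := fun i => (x i - x (i - 1)) / (b - a)
    let ci : ℕ → ℝ := fun i => (y i - y (i - 1) - d i * (y N - y 0)) / (b - a)
    let ei : ℕ → ℝ := fun i => (b * x (i - 1) - a * x i) / (b - a)
    let fi : ℕ → ℝ := fun i => (b * y (i - 1) - a * y i - d i * (b * y 0 - a * y N)) / (b - a)
    let uinv : ℕ → ℝ → ℝ := fun i t => (t - ei i) / ai i
    let p : ℕ → ℝ → ℝ := fun i t => ci i * t + fi i
    ∀ Φg Φh : ℝ → ℝ,
      (∀ i, 1 ≤ i → i ≤ N - 1 → ∀ t ∈ Set.Ico (x (i - 1)) (x i),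
        Φg t = p i (uinv i t) + d i * g (uinv i t)) →
      (∀ t ∈ Set.Icc (x (N - 1)) (x N),
        Φg t = p N (uinv N t) + d N * g (uinv N t)) →
      (∀ i, 1 ≤ i → i ≤ N - 1 → ∀ t ∈ Set.Ico (x (i - 1)) (x i),
        Φh t = p i (uinv i t) + d i * h (uinv i t)) →
      (∀ t ∈ Set.Icc (x (N - 1)) (x N),
        Φh t = p N (uinv N t) + d N * h (uinv N t)) →
      ((∫ t in a..b, (Φg t - Φh t) ^ 2) =
        ∑ i ∈ Finset.Icc 1 N, (d i) ^ 2 * ai i * ∫ t in a..b, (g t - h t) ^ 2) ∧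
      Real.sqrt (∫ t in a..b, (Φg t - Φh t) ^ 2) ≤
        ((Finset.Icc 1 N).sup' (Finset.nonempty_Icc.mpr (by omega)) fun i => |d i|) *
          Real.sqrt (∫ t in a..b, (g t - h t) ^ 2) := by
  intro ai ci ei fi uinv p Φg Φh hg₁ hg₂ hh₁ hh₂
  have hq : IntervalIntegrable (fun t => (g t - h t) ^ 2) volume a b :=
    (intervalIntegrable_iff_integrableOn_Icc_of_le hab.le).2 (hg.sub hh).integrable_sq
  have hdiff : ∀ k < N, EqOn (fun t => (Φg t - Φh t) ^ 2)
      (fun t => d (k + 1) ^ 2 * (g (uinv (k + 1) t) - h (uinv (k + 1) t)) ^ 2)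
      (Ioo (x k) (x (k + 1))) := fun k hk t ht => by
    simp only [eqOn_Ioo_of_piecewise hg₁ hg₂ hk ht, eqOn_Ioo_of_piecewise hh₁ hh₂ hk ht]
    ring
  have hsum : ∫ t in a..b, (Φg t - Φh t) ^ 2 =
      ∑ i ∈ Finset.Icc 1 N, d i ^ 2 * ai i * ∫ t in a..b, (g t - h t) ^ 2 := by
    have := intervalIntegral.integral_eq_sum_of_eqOn_Ioo (fun k hk => (hmono k hk).le)
      (fun k hk => (hq.comp_affineOnto hab.ne (hmono k hk).ne).const_mul _) hdiff
    rw [hxa, hxb] at this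
    rw [this, sum_Icc_one_eq_sum_range]
    refine sum_congr rfl fun k hk => ?_
    rw [intervalIntegral.integral_const_mul, mul_assoc]
    exact congrArg _ (integral_comp_affineOnto hab.ne (hmono k (mem_range.1 hk)).ne
      fun t => (g t - h t) ^ 2)
  refine ⟨hsum, ?_⟩
  have hw : ∀ i ∈ Finset.Icc 1 N, 0 ≤ ai i := fun i hi => by
    obtain ⟨k, rfl⟩ : ∃ k, i = k + 1 := ⟨i - 1, by grind⟩
    exact div_nonneg (sub_nonneg.2 (hmono k (by grind)).le) (sub_nonneg.2 hab.le)
  rw [hsum]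
  exact sqrt_sum_sq_mul_le_sup'_mul_sqrt _ d ai hw (sum_Icc_sub_div_eq_one hxa hxb hab.ne)
    (intervalIntegral.integral_nonneg hab.le fun t _ => sq_nonneg _)
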